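/- arXiv:1912.02842 — 2 statements merged into one kernel-verified Lean document; each statement's English description precedes it below -/
import Mathlib

section
/- Let n ≥ 0 and let c₀, c₁, …, c_n ∈ ℂ, not all zero. Let T be a tempered distribution on ℝ satisfying c₀ T + c₁ T' + ⋯ + c_n T^{(n)} = 0, and suppose T has zero past, i.e., ⟨T, φ⟩ = 0 for every Schwartz function φ ∈ 𝓢(ℝ, ℂ) whose support is contained in (−∞, 0). Then T = 0. -/
/-- The distributional derivative of a tempered distribution on ℝ:
`⟨T', φ⟩ = −⟨T, φ'⟩`. -/
noncomputable def distDeriv (T : SchwartzMap ℝ ℂ →L[ℂ] ℂ) : SchwartzMap ℝ ℂ →L[ℂ] ℂ :=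
  -(T.comp (SchwartzMap.derivCLM ℂ ℂ))

/-!
Over `ℂ` the characteristic polynomial splits, and `(D - z) T` again has zero past, so it suffices
to treat `T' = z T`. Translation `s ↦ φ (· - s)` is differentiable in `𝓢` with derivative `-φ'`
(a second-order Taylor estimate in every seminorm), hence `u s = ⟨T, φ (· - s)⟩` solves
`u' = z u` and `u s = exp (z s) u 0`. Shifting a `φ` supported in `(-∞, a)` into `(-∞, 0)` then
gives `⟨T, φ⟩ = 0`. Such `φ` are dense in `𝓢`: the remainder `smoothTransition (x - R) φ x` of a
cut-off has seminorms `O(1/R)`, because `R ≤ |x|` on its support.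
-/

open SchwartzMap Set Filter Topology Polynomial Real

theorem norm_sub_sub_smul_deriv_le_of_norm_deriv2_le {E : Type*} [NormedAddCommGroup E]
    [NormedSpace ℝ E] {f f' f'' : ℝ → E} (hf : ∀ y, HasDerivAt f (f' y) y)
    (hf' : ∀ y, HasDerivAt f' (f'' y) y) {x h C : ℝ} (hC : ∀ y ∈ uIcc x (x + h), ‖f'' y‖ ≤ C) :
    ‖f (x + h) - f x - h • f' x‖ ≤ C * h ^ 2 := by
  have hdist : ∀ y ∈ uIcc x (x + h), ‖y - x‖ ≤ |h| := fun y hy => by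
    simpa using abs_sub_left_of_mem_uIcc hy
  have hf'_var : ∀ y ∈ uIcc x (x + h), ‖f' y - f' x‖ ≤ C * |h| := fun y hy =>
    (convex_uIcc x (x + h)).norm_image_sub_le_of_norm_hasDerivWithin_le
      (fun z _ => (hf' z).hasDerivWithinAt) hC left_mem_uIcc hy |>.trans
      (mul_le_mul_of_nonneg_left (hdist y hy) ((norm_nonneg _).trans (hC x left_mem_uIcc)))
  have hlin : ∀ y, HasDerivAt (fun z => f z - z • f' x) (f' y - f' x) y := fun y => by
    simpa using (hf y).fun_sub ((hasDerivAt_id y).smul_const (f' x))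
  have := (convex_uIcc x (x + h)).norm_image_sub_le_of_norm_hasDerivWithin_le
    (fun y _ => (hlin y).hasDerivWithinAt) hf'_var left_mem_uIcc right_mem_uIcc
  calc ‖f (x + h) - f x - h • f' x‖
      = ‖(f (x + h) - (x + h) • f' x) - (f x - x • f' x)‖ := by rw [add_smul]; congr 1; abel
    _ ≤ C * |h| * ‖x + h - x‖ := this
    _ = C * h ^ 2 := by rw [add_sub_cancel_left, Real.norm_eq_abs, mul_assoc, abs_mul_abs_self, sq]

namespace Real.smoothTransition

theorem exists_norm_iteratedFDeriv_le (n : ℕ) :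
    ∃ C, ∀ x, ‖iteratedFDeriv ℝ n smoothTransition x‖ ≤ C := by
  cases n with
  | zero => exact ⟨1, fun x => by simpa [abs_of_nonneg (nonneg x)] using le_one x⟩
  | succ n =>
    have hsupp : HasCompactSupport (fderiv ℝ smoothTransition) := by
      refine HasCompactSupport.intro (isCompact_Icc (a := 0) (b := 1)) fun x hx => ?_
      rcases not_and_or.1 hx with hx | hx <;> push Not at hx
      · rw [EventuallyEq.fderiv_eq (f := fun _ => (0 : ℝ)) (by
          filter_upwards [Iio_mem_nhds hx] with y hy using zero_of_nonpos hy.le)]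
        exact fderiv_const_apply _
      · rw [EventuallyEq.fderiv_eq (f := fun _ => (1 : ℝ)) (by
          filter_upwards [Ioi_mem_nhds hx] with y hy using one_of_one_le hy.le)]
        exact fderiv_const_apply _
    have hsmooth : ContDiff ℝ n (fderiv ℝ smoothTransition) :=
      (smoothTransition.contDiff (n := ⊤)).fderiv_right (by exact_mod_cast le_top)
    obtain ⟨C, hC⟩ := (hsmooth.continuous_iteratedFDeriv le_rfl).bounded_above_of_compact_support
      (hsupp.iteratedFDeriv n)
    exact ⟨C, fun x => norm_iteratedFDeriv_fderiv.symm.trans_le (hC x)⟩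

theorem hasTemperateGrowth_comp_sub (R : ℝ) :
    (fun x => smoothTransition (x - R)).HasTemperateGrowth := by
  refine ⟨smoothTransition.contDiff.comp (by fun_prop), fun n => ?_⟩
  obtain ⟨C, hC⟩ := exists_norm_iteratedFDeriv_le n
  exact ⟨0, C, fun x => by simpa [iteratedFDeriv_comp_sub] using hC (x - R)⟩

theorem mul_norm_iteratedFDeriv_comp_sub_le {R : ℝ} (hR : 0 < R) (n : ℕ) {C : ℝ}
    (hC : ∀ x, ‖iteratedFDeriv ℝ n smoothTransition x‖ ≤ C) (x : ℝ) :
    R * ‖iteratedFDeriv ℝ n (fun x => smoothTransition (x - R)) x‖ ≤ C * ‖x‖ := by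
  rw [iteratedFDeriv_comp_sub]
  rcases lt_or_ge x R with hx | hx
  · have hsupp : tsupport smoothTransition ⊆ Ici 0 :=
      closure_minimal (fun y hy => (not_le.1 (mt zero_of_nonpos hy)).le) isClosed_Ici
    have : x - R ∉ Function.support (iteratedFDeriv ℝ n smoothTransition) := fun h =>
      (sub_neg.2 hx).not_ge (hsupp (support_iteratedFDeriv_subset n h))
    rw [Function.notMem_support.1 this, norm_zero, mul_zero]
    exact mul_nonneg ((norm_nonneg _).trans (hC 0)) (norm_nonneg x)
  · rw [mul_comm C, Real.norm_eq_abs, abs_of_pos (hR.trans_le hx)]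
    exact mul_le_mul hx (hC _) (norm_nonneg _) (hR.le.trans hx)

end Real.smoothTransition

namespace SchwartzMap

variable {F : Type*} [NormedAddCommGroup F] [NormedSpace ℝ F]

theorem hasDerivAt_iteratedDeriv (ψ : 𝓢(ℝ, F)) (n : ℕ) (x : ℝ) :
    HasDerivAt (iteratedDeriv n ψ) (iteratedDeriv (n + 1) ψ x) x := by
  rw [iteratedDeriv_succ]
  exact ((ψ.smooth ⊤).differentiable_iteratedDeriv n
    (mod_cast ENat.natCast_lt_top n)).differentiableAt.hasDerivAt

theorem iteratedDeriv_compSubConstCLM_sub_add_smul_deriv (ψ : 𝓢(ℝ, F)) (n : ℕ) (h x : ℝ) :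
    iteratedDeriv n ⇑(compSubConstCLM ℝ h ψ - ψ + h • derivCLM ℝ F ψ) x =
      iteratedDeriv n ψ (x - h) - iteratedDeriv n ψ x + h • iteratedDeriv (n + 1) ψ x := by
  have hcoe : ⇑(compSubConstCLM ℝ h ψ - ψ + h • derivCLM ℝ F ψ) =
      fun y => ψ (y - h) - ψ y + h • deriv ψ y := by
    ext y; simp [compSubConstCLM_apply]
  have hψ : ContDiff ℝ n ψ := ψ.smooth n
  have hψ' : ContDiff ℝ n (deriv ψ) := (derivCLM ℝ F ψ).smooth n
  rw [hcoe, iteratedDeriv_fun_add, iteratedDeriv_fun_sub, iteratedDeriv_fun_const_smul_field,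
    iteratedDeriv_succ', iteratedDeriv_comp_sub_const]
  all_goals fun_prop

theorem seminorm_compSubConstCLM_sub_add_smul_deriv_le (ψ : 𝓢(ℝ, F)) (k n : ℕ) {h : ℝ}
    (hh : |h| ≤ 1) :
    SchwartzMap.seminorm ℝ k n (compSubConstCLM ℝ h ψ - ψ + h • derivCLM ℝ F ψ) ≤
      2 ^ k * (Finset.Iic (k, n + 2)).sup (fun m => SchwartzMap.seminorm ℝ m.1 m.2) ψ * h ^ 2 := by
  set M := 2 ^ k * (Finset.Iic (k, n + 2)).sup (fun m => SchwartzMap.seminorm ℝ m.1 m.2) ψ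
  refine seminorm_le_bound' ℝ k n _ (by positivity) fun x => ?_
  -- The weight `|x| ^ k` is a constant for Taylor's formula; `|x| ≤ 1 + |y|` moves it to `y`.
  have hM : ∀ y ∈ uIcc x (x + -h), ‖|x| ^ k • iteratedDeriv (n + 2) ψ y‖ ≤ M := fun y hy => by
    have hxy : |x| ≤ 1 + ‖y‖ := by
      have hyx : |y - x| ≤ 1 := (abs_sub_left_of_mem_uIcc hy).trans (by simpa using hh)
      have := abs_sub_abs_le_abs_sub x y
      rw [abs_sub_comm] at this
      rw [Real.norm_eq_abs]
      linarith
    rw [norm_smul, Real.norm_eq_abs, abs_pow, abs_abs, ← norm_iteratedFDeriv_eq_norm_iteratedDeriv]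
    exact (mul_le_mul_of_nonneg_right (pow_le_pow_left₀ (abs_nonneg x) hxy k) (norm_nonneg _)).trans
      (one_add_le_sup_seminorm_apply (m := (k, n + 2)) le_rfl le_rfl ψ y)
  have := norm_sub_sub_smul_deriv_le_of_norm_deriv2_le (f := fun y => |x| ^ k • iteratedDeriv n ψ y)
    (fun y => (ψ.hasDerivAt_iteratedDeriv n y).const_smul (|x| ^ k))
    (fun y => (ψ.hasDerivAt_iteratedDeriv (n + 1) y).const_smul (|x| ^ k)) hM
  rw [neg_sq, neg_smul, sub_neg_eq_add, ← sub_eq_add_neg] at this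
  rwa [iteratedDeriv_compSubConstCLM_sub_add_smul_deriv, ← abs_abs x, ← abs_pow, ← Real.norm_eq_abs,
    ← norm_smul, smul_add, smul_sub, smul_comm _ h]

theorem tendsto_slope_compSubConstCLM (ψ : 𝓢(ℝ, F)) :
    Tendsto (fun h : ℝ => h⁻¹ • (compSubConstCLM ℝ h ψ - ψ)) (𝓝[≠] 0) (𝓝 (-derivCLM ℝ F ψ)) := by
  rw [(schwartz_withSeminorms ℝ ℝ F).tendsto_nhds]
  rintro ⟨k, n⟩ ε hε
  set M := 2 ^ k * (Finset.Iic (k, n + 2)).sup (fun m => SchwartzMap.seminorm ℝ m.1 m.2) ψ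
  have hlim : Tendsto (fun h : ℝ => M * |h|) (𝓝[≠] 0) (𝓝 0) := by
    simpa using ((continuous_abs.tendsto (0 : ℝ)).const_mul M).mono_left nhdsWithin_le_nhds
  filter_upwards [hlim.eventually (gt_mem_nhds hε), self_mem_nhdsWithin,
    nhdsWithin_le_nhds (Metric.closedBall_mem_nhds (0 : ℝ) one_pos)] with h hMh hh0 hh1
  rw [mem_compl_singleton_iff] at hh0
  rw [Metric.mem_closedBall, Real.dist_0_eq_abs] at hh1
  calc schwartzSeminormFamily ℝ ℝ F (k, n) (h⁻¹ • (compSubConstCLM ℝ h ψ - ψ) - -derivCLM ℝ F ψ)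
      = |h|⁻¹ * SchwartzMap.seminorm ℝ k n (compSubConstCLM ℝ h ψ - ψ + h • derivCLM ℝ F ψ) := by
        rw [schwartzSeminormFamily_apply, ← abs_inv, ← Real.norm_eq_abs, ← map_smul_eq_mul,
          sub_neg_eq_add, smul_add, smul_smul, inv_mul_cancel₀ hh0, one_smul]
    _ ≤ |h|⁻¹ * (M * h ^ 2) := by
        gcongr; exact seminorm_compSubConstCLM_sub_add_smul_deriv_le ψ k n hh1
    _ = M * |h| := by rw [← sq_abs]; field_simp
    _ < ε := hMh

theorem hasDerivAt_apply_compSubConstCLM {V : Type*} [NormedAddCommGroup V] [NormedSpace ℝ V]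
    (T : 𝓢(ℝ, F) →L[ℝ] V) (φ : 𝓢(ℝ, F)) (a : ℝ) :
    HasDerivAt (fun s => T (compSubConstCLM ℝ s φ))
      (-T (derivCLM ℝ F (compSubConstCLM ℝ a φ))) a := by
  rw [hasDerivAt_iff_tendsto_slope_zero]
  convert (T.continuous.tendsto _).comp (tendsto_slope_compSubConstCLM (compSubConstCLM ℝ a φ))
    using 2 with h
  · simp [compSubConstCLM_comp]
  · simp

theorem tsupport_compSubConstCLM {E : Type*} [NormedAddCommGroup E] [NormedSpace ℝ E]
    (φ : 𝓢(E, F)) (a : E) :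
    tsupport (compSubConstCLM ℝ a φ) = (· - a) ⁻¹' tsupport φ :=
  tsupport_comp_eq_preimage φ (Homeomorph.subRight a)

theorem exists_seminorm_smoothTransition_smul_le (φ : 𝓢(ℝ, F)) (k n : ℕ) :
    ∃ K, ∀ R > 0,
      SchwartzMap.seminorm ℝ k n (smulLeftCLM F (fun x => smoothTransition (x - R)) φ) ≤ K / R := by
  choose B hB using smoothTransition.exists_norm_iteratedFDeriv_le
  have hB0 : ∀ i, 0 ≤ B i := fun i => (norm_nonneg _).trans (hB i 0)
  refine ⟨∑ i ∈ Finset.range (n + 1), n.choose i * B i * SchwartzMap.seminorm ℝ (k + 1) (n - i) φ,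
    fun R hR => seminorm_le_bound ℝ k n _ ?_ fun x => ?_⟩
  · exact div_nonneg (Finset.sum_nonneg fun i _ => by have := hB0 i; positivity) hR.le
  rw [smulLeftCLM_apply (smoothTransition.hasTemperateGrowth_comp_sub R), le_div_iff₀ hR]
  calc ‖x‖ ^ k * ‖iteratedFDeriv ℝ n (fun y => smoothTransition (y - R) • φ y) x‖ * R
      ≤ ‖x‖ ^ k * (∑ i ∈ Finset.range (n + 1), n.choose i *
          ‖iteratedFDeriv ℝ i (fun y => smoothTransition (y - R)) x‖ *
          ‖iteratedFDeriv ℝ (n - i) φ x‖) * R := by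
        gcongr
        exact norm_iteratedFDeriv_smul_le (smoothTransition.hasTemperateGrowth_comp_sub R).1
          (φ.smooth ⊤) x (mod_cast le_top)
    _ = ∑ i ∈ Finset.range (n + 1), n.choose i *
          (R * ‖iteratedFDeriv ℝ i (fun y => smoothTransition (y - R)) x‖) *
          (‖x‖ ^ k * ‖iteratedFDeriv ℝ (n - i) φ x‖) := by
        rw [Finset.mul_sum, Finset.sum_mul]; congr! 1; ring
    _ ≤ ∑ i ∈ Finset.range (n + 1), n.choose i * (B i * ‖x‖) *
          (‖x‖ ^ k * ‖iteratedFDeriv ℝ (n - i) φ x‖) := by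
        refine Finset.sum_le_sum fun i _ => ?_
        gcongr _ * ?_ * _
        exact smoothTransition.mul_norm_iteratedFDeriv_comp_sub_le hR i (hB i) x
    _ = ∑ i ∈ Finset.range (n + 1), n.choose i * B i *
          (‖x‖ ^ (k + 1) * ‖iteratedFDeriv ℝ (n - i) φ x‖) := by
        congr! 1; ring
    _ ≤ _ := by
        gcongr with i
        · exact mul_nonneg (Nat.cast_nonneg _) (hB0 i)
        · exact le_seminorm ℝ (k + 1) (n - i) φ x

theorem tendsto_smoothTransition_smul_atTop (φ : 𝓢(ℝ, F)) :
    Tendsto (fun R => smulLeftCLM F (fun x => smoothTransition (x - R)) φ) atTop (𝓝 0) := by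
  rw [(schwartz_withSeminorms ℝ ℝ F).tendsto_nhds]
  rintro ⟨k, n⟩ ε hε
  obtain ⟨K, hK⟩ := exists_seminorm_smoothTransition_smul_le φ k n
  filter_upwards [eventually_gt_atTop 0,
    (tendsto_const_nhds.div_atTop tendsto_id).eventually (gt_mem_nhds hε)] with R hR hKR
  simpa using (hK R hR).trans_lt hKR

theorem dense_setOf_tsupport_subset_Iio : Dense {φ : 𝓢(ℝ, F) | ∃ a, tsupport φ ⊆ Iio a} := by
  intro φ
  refine mem_closure_of_tendsto (b := atTop)
    (f := fun R => φ - smulLeftCLM F (fun x => smoothTransition (x - R)) φ) ?_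
    (Eventually.of_forall fun R => ⟨R + 2, ?_⟩)
  · simpa using tendsto_const_nhds.sub (tendsto_smoothTransition_smul_atTop φ)
  · have hsupp : Function.support (φ - smulLeftCLM F (fun x => smoothTransition (x - R)) φ) ⊆
        Iic (R + 1) := fun x hx => by
      by_contra hxR
      refine hx ?_
      rw [sub_apply, smulLeftCLM_apply_apply (smoothTransition.hasTemperateGrowth_comp_sub R),
        smoothTransition.one_of_one_le (by simp at hxR; linarith), one_smul, sub_self]
    exact (closure_minimal hsupp isClosed_Iic).trans (Iic_subset_Iio.2 (by linarith))

end SchwartzMap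

noncomputable def distDerivLinearMap : Module.End ℂ (𝓢(ℝ, ℂ) →L[ℂ] ℂ) where
  toFun := distDeriv
  map_add' _ _ := by simp [distDeriv, ContinuousLinearMap.add_comp, add_comm]
  map_smul' _ _ := by simp [distDeriv]

@[simp]
theorem coe_distDerivLinearMap : ⇑distDerivLinearMap = distDeriv := rfl

def HasZeroPast (T : 𝓢(ℝ, ℂ) →L[ℂ] ℂ) : Prop :=
  ∀ φ : 𝓢(ℝ, ℂ), tsupport φ ⊆ Iio 0 → T φ = 0

theorem HasZeroPast.distDeriv_sub_smul {T : 𝓢(ℝ, ℂ) →L[ℂ] ℂ} (hT : HasZeroPast T) (z : ℂ) :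
    HasZeroPast (distDeriv T - z • T) := fun φ hφ => by
  simp [distDeriv, hT φ hφ, hT _ ((tsupport_derivCLM_subset ℂ φ).trans hφ)]

theorem apply_compSubConstCLM_of_distDeriv_eq_smul {T : 𝓢(ℝ, ℂ) →L[ℂ] ℂ} {z : ℂ}
    (hT : distDeriv T = z • T) (φ : 𝓢(ℝ, ℂ)) (s : ℝ) :
    T (compSubConstCLM ℝ s φ) = Complex.exp (z * s) * T φ := by
  set u : ℝ → ℂ := fun s => T (compSubConstCLM ℝ s φ)
  have hu : ∀ s, HasDerivAt u (z * u s) s := fun s => by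
    refine (hasDerivAt_apply_compSubConstCLM (T.restrictScalars ℝ) φ s).congr_deriv ?_
    exact congrArg (· (compSubConstCLM ℝ s φ)) hT
  have hv : ∀ s, HasDerivAt (fun s : ℝ => Complex.exp (-z * s) * u s) 0 s := fun s => by
    have he : HasDerivAt (fun s : ℝ => Complex.exp (-z * s)) (Complex.exp (-z * s) * -z) s := by
      simpa using ((hasDerivAt_id (s : ℂ)).comp_ofReal.const_mul (-z)).cexp
    exact (he.mul (hu s)).congr_deriv (by ring)
  have := is_const_of_deriv_eq_zero (fun s => (hv s).differentiableAt) (fun s => (hv s).deriv) s 0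
  simp only [Complex.ofReal_zero, mul_zero, Complex.exp_zero, one_mul, u, compSubConstCLM_zero,
    ContinuousLinearMap.id_apply] at this
  rw [← this, ← mul_assoc, ← Complex.exp_add]
  simp

theorem HasZeroPast.eq_zero_of_distDeriv_eq_smul {T : 𝓢(ℝ, ℂ) →L[ℂ] ℂ} (hpast : HasZeroPast T)
    {z : ℂ} (hT : distDeriv T = z • T) : T = 0 := by
  refine DFunLike.coe_injective <| T.continuous.ext_on dense_setOf_tsupport_subset_Iio
    continuous_const fun φ ⟨a, ha⟩ => ?_
  have hshift := apply_compSubConstCLM_of_distDeriv_eq_smul hT φ (-a)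
  rw [hpast _ (by rw [tsupport_compSubConstCLM]; intro x hx; simpa using ha hx)] at hshift
  exact (mul_eq_zero.1 hshift.symm).resolve_left (Complex.exp_ne_zero _)

theorem HasZeroPast.eq_zero_of_aeval_multiset_prod_X_sub_C_eq_zero (m : Multiset ℂ)
    {T : 𝓢(ℝ, ℂ) →L[ℂ] ℂ} (hpast : HasZeroPast T)
    (hT : aeval distDerivLinearMap (m.map (X - C ·)).prod T = 0) : T = 0 := by
  induction m using Multiset.induction_on generalizing T with
  | empty => simpa using hT
  | cons r m ih =>
    rw [Multiset.map_cons, Multiset.prod_cons, mul_comm, map_mul, Module.End.mul_apply] at hT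
    refine hpast.eq_zero_of_distDeriv_eq_smul (z := r) (sub_eq_zero.1 ?_)
    exact ih (hpast.distDeriv_sub_smul r) (by simpa using hT)

theorem HasZeroPast.eq_zero_of_aeval_eq_zero {T : 𝓢(ℝ, ℂ) →L[ℂ] ℂ} (hpast : HasZeroPast T)
    {p : ℂ[X]} (hp : p ≠ 0) (hT : aeval distDerivLinearMap p T = 0) : T = 0 := by
  rw [← C_leadingCoeff_mul_prod_multiset_X_sub_C (p := p) IsAlgClosed.card_roots_eq_natDegree,
    map_mul, aeval_C, Module.End.mul_apply, Module.algebraMap_end_apply] at hT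
  exact hpast.eq_zero_of_aeval_multiset_prod_X_sub_C_eq_zero _
    ((smul_eq_zero.1 hT).resolve_left (leadingCoeff_ne_zero.2 hp))

/-- A tempered distribution `T` on ℝ satisfying a nonzero linear
constant-coefficient ODE `c₀ T + c₁ T' + ⋯ + c_n T⁽ⁿ⁾ = 0`, whose past is zero
(`⟨T, φ⟩ = 0` for every Schwartz `φ` supported in `(−∞,0)`), is zero. -/
theorem tempered_ode_null_solution_trivial (n : ℕ) (c : Fin (n + 1) → ℂ)
    (hc : ∃ k, c k ≠ 0) (T : SchwartzMap ℝ ℂ →L[ℂ] ℂ)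
    (hode : ∑ k : Fin (n + 1), c k • (distDeriv^[(k : ℕ)] T) = 0)
    (hpast : ∀ φ : SchwartzMap ℝ ℂ, tsupport (φ : ℝ → ℂ) ⊆ Set.Iio 0 → T φ = 0) :
    T = 0 := by
  set p : ℂ[X] := ∑ k : Fin (n + 1), C (c k) * X ^ (k : ℕ)
  have hcoeff : ∀ k : Fin (n + 1), p.coeff k = c k := fun k => by
    simp [p, finsetSum_coeff, Fin.val_inj]
  obtain ⟨k, hk⟩ := hc
  refine HasZeroPast.eq_zero_of_aeval_eq_zero hpast (p := p) (fun hp => hk ?_) ?_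
  · rw [← hcoeff, hp, coeff_zero]
  · simpa [p, map_sum, Module.End.pow_apply] using hode
end

section
/- Let d ≥ 1. Let u : ℝ^d × ℝ → ℂ be a smooth function such that for every R > 0, every pair of multi-indices α, β ∈ ℕ^d and every m ∈ ℕ, one has sup{ |x^α (∂_x^β ∂_t^m u)(x,t)| : x ∈ ℝ^d, |t| ≤ R } < ∞ (the spatial profiles of u and all its derivatives are Schwartz, uniformly on compact time intervals). If u has zero past (u(x,t) = 0 for all x and all t < 0) and u satisfies the diffusion (heat) equation ∂u/∂t = Δu on ℝ^d × ℝ, where Δ = ∂²/∂x₁² + ⋯ + ∂²/∂x_d² is the spatial Laplacian, then u is identically zero. -/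
open MeasureTheory Filter Set


open MvPolynomial

/-- Spatial partial derivative ∂/∂x_k of a function on ℝ^d × ℝ. -/
noncomputable def spaceDeriv (d : ℕ) (k : Fin d) (f : ((Fin d → ℝ) × ℝ) → ℂ) :
    ((Fin d → ℝ) × ℝ) → ℂ :=
  fun q => fderiv ℝ f q (Pi.single k 1, 0)

/-- Time partial derivative ∂/∂t of a function on ℝ^d × ℝ. -/
noncomputable def timeDeriv (d : ℕ) (f : ((Fin d → ℝ) × ℝ) → ℂ) :
    ((Fin d → ℝ) × ℝ) → ℂ :=
  fun q => fderiv ℝ f q (0, 1)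

/-- Iterated spatial derivative ∂_x^β. -/
noncomputable def spatialOp (d : ℕ) (β : Fin d → ℕ) :
    (((Fin d → ℝ) × ℝ) → ℂ) → (((Fin d → ℝ) × ℝ) → ℂ) :=
  (List.ofFn fun k : Fin d => (spaceDeriv d k)^[β k]).foldr (· ∘ ·) id

/-- The constant-coefficient differential operator D_p associated with a polynomial
`p ∈ ℂ[X₁,…,X_d,T]`, where `Sum.inl k ↦ ∂/∂x_k` and `Sum.inr () ↦ ∂/∂t`. -/
noncomputable def Dp (d : ℕ) (p : MvPolynomial (Fin d ⊕ Unit) ℂ)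
    (u : ((Fin d → ℝ) × ℝ) → ℂ) : ((Fin d → ℝ) × ℝ) → ℂ :=
  fun q => ∑ α ∈ p.support,
    p.coeff α * (timeDeriv d)^[α (Sum.inr ())]
      (spatialOp d (fun k => α (Sum.inl k)) u) q

/-- `u` has zero past: `u(x,t) = 0` for all `x` and all `t < 0`. -/
def ZeroPast (d : ℕ) (u : ((Fin d → ℝ) × ℝ) → ℂ) : Prop :=
  ∀ (x : Fin d → ℝ) (t : ℝ), t < 0 → u (x, t) = 0

/-- The univariate polynomial `p(0,…,0,T) ∈ ℂ[T]`. -/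
noncomputable def substZero (d : ℕ) (p : MvPolynomial (Fin d ⊕ Unit) ℂ) : Polynomial ℂ :=
  MvPolynomial.aeval (Sum.elim (fun _ : Fin d => (0 : Polynomial ℂ))
    (fun _ => Polynomial.X)) p

lemma foldr_comp_id {α : Type*} (l : List (α → α)) (h : ∀ f ∈ l, f = id) :
    l.foldr (· ∘ ·) id = id := by
  induction l with
  | nil => rfl
  | cons a l ih =>
      simp only [List.foldr_cons, h a (List.mem_cons_self),
        ih fun f hf => h f (List.mem_cons_of_mem a hf)]
      rfl

lemma foldr_ofFn_single {α : Type*} {m : ℕ} (g : Fin m → (α → α)) (k : Fin m)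
    (h : ∀ j, j ≠ k → g j = id) :
    (List.ofFn g).foldr (· ∘ ·) id = g k := by
  induction m with
  | zero => exact k.elim0
  | succ n ih =>
      rw [List.ofFn_succ, List.foldr_cons]
      rcases Fin.eq_zero_or_eq_succ k with hk | ⟨j, rfl⟩
      · subst hk
        rw [foldr_comp_id _ fun f hf => by
          obtain ⟨j, rfl⟩ := List.mem_ofFn.1 hf
          exact h _ (Fin.succ_ne_zero j)]
        rfl
      · rw [h 0 (Fin.succ_ne_zero j).symm, ih (fun i => g i.succ) j
          fun i hi => h i.succ (by simpa using hi)]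
        rfl

lemma spatialOp_zero (d : ℕ) (u : ((Fin d → ℝ) × ℝ) → ℂ) :
    spatialOp d (fun _ => 0) u = u := by
  have : spatialOp d (fun _ => 0) = id := by
    unfold spatialOp
    exact foldr_comp_id _ fun f hf => by
      obtain ⟨j, rfl⟩ := List.mem_ofFn.1 hf
      rfl
  rw [this]; rfl

lemma spatialOp_single (d : ℕ) (k : Fin d) (n : ℕ) (u : ((Fin d → ℝ) × ℝ) → ℂ) :
    spatialOp d (Pi.single k n) u = (spaceDeriv d k)^[n] u := by
  have : spatialOp d (Pi.single k n) = (spaceDeriv d k)^[n] := by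
    unfold spatialOp
    have := foldr_ofFn_single (fun j : Fin d => (spaceDeriv d j)^[Pi.single (M := fun _ => ℕ) k n j]) k
      (fun j hj => by simp only [Pi.single_eq_of_ne hj]; rfl)
    simpa using this
  rw [this]

lemma contDiff_fderiv_apply {d : ℕ} {f : ((Fin d → ℝ) × ℝ) → ℂ} (hf : ContDiff ℝ (⊤ : ℕ∞) f)
    (v : (Fin d → ℝ) × ℝ) : ContDiff ℝ (⊤ : ℕ∞) (fun q => fderiv ℝ f q v) := by
  exact (ContinuousLinearMap.apply ℝ ℂ v).contDiff.comp (hf.fderiv_right (by simp))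

lemma contDiff_spaceDeriv {d : ℕ} {f : ((Fin d → ℝ) × ℝ) → ℂ} (hf : ContDiff ℝ (⊤ : ℕ∞) f)
    (k : Fin d) : ContDiff ℝ (⊤ : ℕ∞) (spaceDeriv d k f) :=
  contDiff_fderiv_apply hf _

lemma contDiff_timeDeriv {d : ℕ} {f : ((Fin d → ℝ) × ℝ) → ℂ} (hf : ContDiff ℝ (⊤ : ℕ∞) f) :
    ContDiff ℝ (⊤ : ℕ∞) (timeDeriv d f) :=
  contDiff_fderiv_apply hf _

lemma hasDerivAt_slice_time {d : ℕ} {f : ((Fin d → ℝ) × ℝ) → ℂ} (hf : ContDiff ℝ (⊤ : ℕ∞) f)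
    (x : Fin d → ℝ) (t : ℝ) :
    HasDerivAt (fun τ => f (x, τ)) (timeDeriv d f (x, t)) t := by
  have hc : HasDerivAt (fun τ : ℝ => ((x, τ) : (Fin d → ℝ) × ℝ)) (0, 1) t :=
    (hasDerivAt_const t x).prodMk (hasDerivAt_id t)
  have hF := (hf.differentiable (by simp) (x, t)).hasFDerivAt
  exact hF.comp_hasDerivAt t hc

lemma hasDerivAt_slice_space {d : ℕ} {f : ((Fin d → ℝ) × ℝ) → ℂ} (hf : ContDiff ℝ (⊤ : ℕ∞) f)
    (k : Fin d) (x : Fin d → ℝ) (t : ℝ) (s : ℝ) :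
    HasDerivAt (fun r => f (Function.update x k r, t))
      (spaceDeriv d k f (Function.update x k s, t)) s := by
  have hc : HasDerivAt (fun r : ℝ => ((Function.update x k r, t) : (Fin d → ℝ) × ℝ))
      (Pi.single k 1, 0) s :=
    (hasDerivAt_update x k s).prodMk (hasDerivAt_const s t)
  have hF := (hf.differentiable (by simp) (Function.update x k s, t)).hasFDerivAt
  exact hF.comp_hasDerivAt s hc

/-- weight -/
noncomputable def wt (d : ℕ) (x : Fin d → ℝ) : ℝ := ∏ j, ((1:ℝ) + (x j)^2)⁻¹

lemma wt_pos {d : ℕ} (x : Fin d → ℝ) : 0 < wt d x :=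
  Finset.prod_pos fun j _ => inv_pos.2 (by positivity)

lemma wt_le_one {d : ℕ} (x : Fin d → ℝ) : wt d x ≤ 1 :=
  Finset.prod_le_one (fun j _ => le_of_lt (inv_pos.2 (by positivity)))
    (fun j _ => inv_le_one_of_one_le₀ (le_add_of_nonneg_right (sq_nonneg _)))

lemma integrable_wt (d : ℕ) : Integrable (wt d) := by
  have : Integrable (fun x : Fin d → ℝ => ∏ j, ((1:ℝ) + (x j)^2)⁻¹) :=
    Integrable.fintype_prod (f := fun _ : Fin d => fun s : ℝ => ((1:ℝ) + s^2)⁻¹)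
      (fun _ => integrable_inv_one_add_sq)
  exact this

lemma integrable_of_decay {d : ℕ} {E : Type*} [NormedAddCommGroup E] {f : (Fin d → ℝ) → E}
    (hc : Continuous f) (C : ℝ) (hb : ∀ x, ‖f x‖ ≤ C * wt d x) : Integrable f :=
  Integrable.mono' ((integrable_wt d).const_mul C) hc.aestronglyMeasurable
    (Filter.Eventually.of_forall hb)

/-- From bounds on all `x^α • G` extract a weight bound. -/
lemma decay_bound {d : ℕ} {G : ((Fin d → ℝ) × ℝ) → ℂ} {R : ℝ}
    (h : ∀ α : Fin d → ℕ, ∃ C : ℝ, ∀ (x : Fin d → ℝ) (t : ℝ), |t| ≤ R →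
      ‖(∏ k, x k ^ α k) • G (x, t)‖ ≤ C) :
    ∃ C : ℝ, 0 ≤ C ∧ ∀ (x : Fin d → ℝ) (t : ℝ), |t| ≤ R → ‖G (x, t)‖ ≤ C * wt d x := by
  choose C hC using h
  set A : Finset (Fin d) → Fin d → ℕ := fun S => fun j => if j ∈ S then 2 else 0 with hA
  refine ⟨∑ S ∈ Finset.univ.powerset, max (C (A S)) 0, ?_, ?_⟩
  · exact Finset.sum_nonneg fun S _ => le_max_right _ _
  intro x t ht
  have key : (∏ j, ((1:ℝ) + (x j)^2)) * ‖G (x, t)‖ ≤ ∑ S ∈ Finset.univ.powerset, max (C (A S)) 0 := by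
    have expand : (∏ j, ((1:ℝ) + (x j)^2)) = ∑ S ∈ Finset.univ.powerset, ∏ j ∈ S, (x j)^2 := by
      have : (∏ j, ((1:ℝ) + (x j)^2)) = ∏ j, ((x j)^2 + 1) := by
        exact Finset.prod_congr rfl fun j _ => add_comm _ _
      rw [this, Finset.prod_add]
      refine Finset.sum_congr rfl fun S _ => ?_
      simp
    rw [expand, Finset.sum_mul]
    refine Finset.sum_le_sum fun S _ => ?_
    have h1 : (∏ j ∈ S, (x j)^2) * ‖G (x, t)‖ = ‖(∏ k, x k ^ A S k) • G (x, t)‖ := by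
      rw [norm_smul, Real.norm_eq_abs]
      have : (∏ k, x k ^ A S k) = ∏ j ∈ S, (x j)^2 := by
        rw [hA]
        rw [← Finset.prod_subset (Finset.subset_univ S) (fun j _ hj => by simp [hj])]
        exact Finset.prod_congr rfl fun j hj => by simp [hj]
      rw [this, abs_of_nonneg (Finset.prod_nonneg fun j _ => sq_nonneg _)]
    rw [h1]
    exact le_trans (hC (A S) x t ht) (le_max_left _ _)
  have hp : 0 < ∏ j, ((1:ℝ) + (x j)^2) := Finset.prod_pos fun j _ => by positivity
  have : ‖G (x, t)‖ ≤ (∑ S ∈ Finset.univ.powerset, max (C (A S)) 0) * (∏ j, ((1:ℝ) + (x j)^2))⁻¹ := by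
    rw [← div_eq_mul_inv, le_div_iff₀ hp]
    linarith [key]
  calc ‖G (x, t)‖ ≤ _ := this
    _ = _ := by rw [wt, ← Finset.prod_inv_distrib]

lemma integral_deriv_zero_1d (g g' : ℝ → ℝ) (hd : ∀ s, HasDerivAt g (g' s) s)
    (hi : Integrable g') (htop : Tendsto g atTop (nhds 0))
    (hbot : Tendsto g atBot (nhds 0)) : ∫ s, g' s = 0 := by
  have h1 : ∫ s in Set.Ioi (0:ℝ), g' s = 0 - g 0 :=
    integral_Ioi_of_hasDerivAt_of_tendsto (hd 0).continuousAt.continuousWithinAt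
      (fun x _ => hd x) hi.integrableOn htop
  have h2 : ∫ s in Set.Iic (0:ℝ), g' s = g 0 - 0 :=
    integral_Iic_of_hasDerivAt_of_tendsto (hd 0).continuousAt.continuousWithinAt
      (fun x _ => hd x) hi.integrableOn hbot
  rw [← intervalIntegral.integral_Iic_add_Ioi hi.integrableOn hi.integrableOn, h1, h2]
  ring

lemma tendsto_wt_factor : Tendsto (fun s : ℝ => ((1:ℝ) + s^2)⁻¹) atTop (nhds 0) :=
  Tendsto.inv_tendsto_atTop (by
    apply tendsto_atTop_add_const_left
    exact (tendsto_pow_atTop (by norm_num)).comp tendsto_id)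

lemma tendsto_wt_factor_bot : Tendsto (fun s : ℝ => ((1:ℝ) + s^2)⁻¹) atBot (nhds 0) := by
  have : Tendsto (fun s : ℝ => s^2) atBot atTop := by
    have h := (tendsto_pow_atTop (n := 2) (by norm_num : 2 ≠ 0)).comp
      (tendsto_neg_atBot_atTop (G := ℝ))
    have he : ((fun x : ℝ => x ^ 2) ∘ Neg.neg) = fun s : ℝ => s^2 := by
      funext s; simp [neg_pow]
    rwa [he] at h
  exact Tendsto.inv_tendsto_atTop (tendsto_atTop_add_const_left _ _ this)

lemma line_tendsto {n : ℕ} (k : Fin (n+1)) (h : (Fin (n+1) → ℝ) → ℝ) {C : ℝ}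
    (hb : ∀ x, |h x| ≤ C * wt (n+1) x) (y : Fin n → ℝ) (l : Filter ℝ)
    (hl : Tendsto (fun s : ℝ => ((1:ℝ) + s^2)⁻¹) l (nhds 0)) :
    Tendsto (fun s => h (k.insertNth s y)) l (nhds 0) := by
  have hT : Tendsto (fun s : ℝ => (C * ∏ j, ((1:ℝ) + (y j)^2)⁻¹) * ((1:ℝ) + s^2)⁻¹)
      l (nhds 0) := by
    simpa using hl.const_mul (C * ∏ j, ((1:ℝ) + (y j)^2)⁻¹)
  refine squeeze_zero_norm (fun s => ?_) hT
  have hw : wt (n+1) (k.insertNth s y)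
      = ((1:ℝ) + s^2)⁻¹ * ∏ j, ((1:ℝ) + (y j)^2)⁻¹ := by
    rw [wt, Fin.prod_univ_succAbove _ k]
    simp
  have hbs := hb (k.insertNth s y)
  rw [hw] at hbs
  rw [Real.norm_eq_abs]
  calc |h (k.insertNth s y)| ≤ C * (((1:ℝ) + s^2)⁻¹ * ∏ j, ((1:ℝ) + (y j)^2)⁻¹) := hbs
    _ = (C * ∏ j, ((1:ℝ) + (y j)^2)⁻¹) * ((1:ℝ) + s^2)⁻¹ := by ring

lemma integral_partial_zero {n : ℕ} (k : Fin (n+1)) (h h' : (Fin (n+1) → ℝ) → ℝ)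
    (hder : ∀ (x : Fin (n+1) → ℝ) (s : ℝ),
      HasDerivAt (fun r => h (Function.update x k r)) (h' (Function.update x k s)) s)
    (hint : Integrable h') {C : ℝ}
    (hb : ∀ x, |h x| ≤ C * wt (n+1) x) :
    ∫ x, h' x = 0 := by
  have mp := (measurePreserving_piFinSuccAbove
      (fun _ : Fin (n+1) => (volume : Measure ℝ)) k).symm
  set e := MeasurableEquiv.piFinSuccAbove (fun _ : Fin (n+1) => ℝ) k with he
  have hsymm : ∀ p : ℝ × (Fin n → ℝ), e.symm p = k.insertNth p.1 p.2 := by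
    intro p
    simp [he, MeasurableEquiv.piFinSuccAbove_symm_apply, Fin.insertNthEquiv]
  have h0 : ∫ x, h' x = ∫ p : ℝ × (Fin n → ℝ),
      h' (k.insertNth p.1 p.2) ∂((volume : Measure ℝ).prod
        (Measure.pi fun _ => (volume : Measure ℝ))) := by
    rw [volume_pi, ← mp.integral_comp']
    exact integral_congr_ae (Filter.Eventually.of_forall fun p => congrArg h' (hsymm p))
  have hint' : Integrable (fun p : ℝ × (Fin n → ℝ) => h' (k.insertNth p.1 p.2))
      (((volume : Measure ℝ)).prod (Measure.pi fun _ => (volume : Measure ℝ))) := by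
    have hint2 : Integrable h' (Measure.pi fun _ : Fin (n+1) => (volume : Measure ℝ)) := by
      rwa [← volume_pi]
    have := (mp.integrable_comp_emb
      (MeasurableEquiv.measurableEmbedding e.symm) (g := h')).2 hint2
    rw [show (fun p : ℝ × (Fin n → ℝ) => h' (k.insertNth p.1 p.2)) = h' ∘ e.symm from
      funext fun p => by rw [Function.comp_apply, hsymm p]]
    exact this
  have inner_zero : ∀ᵐ y ∂(Measure.pi fun _ : Fin n => (volume : Measure ℝ)),
      (∫ s, h' (k.insertNth s y)) = 0 := by
    filter_upwards [hint'.prod_left_ae] with y hy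
    refine integral_deriv_zero_1d (fun s => h (k.insertNth s y)) _ (fun s => ?_) hy
      (line_tendsto k h hb y atTop tendsto_wt_factor)
      (line_tendsto k h hb y atBot tendsto_wt_factor_bot)
    have := hder (k.insertNth s y) s
    simp only [Fin.update_insertNth] at this
    exact this
  rw [h0, integral_prod_symm _ hint']
  calc (∫ (y : Fin n → ℝ), (∫ (s : ℝ), h' (k.insertNth (s, y).1 (s, y).2))
        ∂(Measure.pi fun _ : Fin n => (volume : Measure ℝ)))
      = ∫ (_y : Fin n → ℝ), (0:ℝ) ∂(Measure.pi fun _ : Fin n => (volume : Measure ℝ)) := by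
        refine integral_congr_ae ?_
        filter_upwards [inner_zero] with y hy
        simpa using hy
    _ = 0 := by simp

lemma bound_mul {a b Ca Cb w : ℝ} (ha : a ≤ Ca * w) (hb : b ≤ Cb * w)
    (ha0 : 0 ≤ a) (hb0 : 0 ≤ b) (hCa : 0 ≤ Ca) (hCb : 0 ≤ Cb)
    (hw0 : 0 < w) (hw1 : w ≤ 1) : a * b ≤ Ca * Cb * w := by
  nlinarith [mul_le_mul ha hb hb0 (by positivity),
    mul_nonneg (mul_nonneg hCa hCb) hw0.le]

lemma re_mul_abs (a b : ℂ) : |((starRingEnd ℂ) a * b).re| ≤ ‖a‖ * ‖b‖ := by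
  refine (Complex.abs_re_le_norm _).trans ?_
  rw [norm_mul, RCLike.norm_conj]

lemma re_mul_norm (a b : ℂ) : ‖((starRingEnd ℂ) a * b).re‖ ≤ ‖a‖ * ‖b‖ := by
  rw [Real.norm_eq_abs]; exact re_mul_abs a b

/- derivative of the slice of `Re (conj u * ∂ₖ u)` -/
lemma hasDerivAt_hk {d : ℕ} {u : ((Fin d → ℝ) × ℝ) → ℂ} (hu : ContDiff ℝ (⊤ : ℕ∞) u)
    (k : Fin d) (x : Fin d → ℝ) (t s : ℝ) :
    HasDerivAt (fun r => ((starRingEnd ℂ) (u (Function.update x k r, t)) *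
        spaceDeriv d k u (Function.update x k r, t)).re)
      (Complex.normSq (spaceDeriv d k u (Function.update x k s, t)) +
        ((starRingEnd ℂ) (u (Function.update x k s, t)) *
          spaceDeriv d k (spaceDeriv d k u) (Function.update x k s, t)).re) s := by
  have hA := hasDerivAt_slice_space hu k x t s
  have hB := hasDerivAt_slice_space (contDiff_spaceDeriv hu k) k x t s
  have hA' : HasDerivAt (fun r => (starRingEnd ℂ) (u (Function.update x k r, t)))
      ((starRingEnd ℂ) (spaceDeriv d k u (Function.update x k s, t))) s := by
    have := (Complex.conjCLE.toContinuousLinearMap.hasFDerivAt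
      (x := u (Function.update x k s, t))).comp_hasDerivAt s hA
    exact this
  have hmul := hA'.mul hB
  have hre := (Complex.reCLM.hasFDerivAt (x := _)).comp_hasDerivAt s hmul
  have hval : Complex.normSq (spaceDeriv d k u (Function.update x k s, t)) +
      ((starRingEnd ℂ) (u (Function.update x k s, t)) *
        spaceDeriv d k (spaceDeriv d k u) (Function.update x k s, t)).re
      = Complex.reCLM ((starRingEnd ℂ) (spaceDeriv d k u (Function.update x k s, t)) *
          spaceDeriv d k u (Function.update x k s, t) +
        (starRingEnd ℂ) (u (Function.update x k s, t)) *
          spaceDeriv d k (spaceDeriv d k u) (Function.update x k s, t)) := by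
    simp only [Complex.reCLM_apply, Complex.add_re, Complex.mul_re, Complex.conj_re,
      Complex.conj_im, Complex.normSq_apply]
    ring
  rw [hval]
  exact hre

lemma hasDerivAt_normSq_time {d : ℕ} {u : ((Fin d → ℝ) × ℝ) → ℂ} (hu : ContDiff ℝ (⊤ : ℕ∞) u)
    (x : Fin d → ℝ) (t : ℝ) :
    HasDerivAt (fun τ => Complex.normSq (u (x, τ)))
      (2 * ((starRingEnd ℂ) (u (x, t)) * timeDeriv d u (x, t)).re) t := by
  have hA := hasDerivAt_slice_time hu x t
  have hre : HasDerivAt (fun τ => (u (x, τ)).re) ((timeDeriv d u (x, t)).re) t :=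
    (Complex.reCLM.hasFDerivAt (x := _)).comp_hasDerivAt t hA
  have him : HasDerivAt (fun τ => (u (x, τ)).im) ((timeDeriv d u (x, t)).im) t :=
    (Complex.imCLM.hasFDerivAt (x := _)).comp_hasDerivAt t hA
  have hd := (hre.mul hre).add (him.mul him)
  have hfun : (fun τ => Complex.normSq (u (x, τ)))
      = fun τ => (u (x, τ)).re * (u (x, τ)).re + (u (x, τ)).im * (u (x, τ)).im :=
    funext fun τ => Complex.normSq_apply _
  have hval : 2 * ((starRingEnd ℂ) (u (x, t)) * timeDeriv d u (x, t)).re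
      = (timeDeriv d u (x, t)).re * (u (x, t)).re + (u (x, t)).re * (timeDeriv d u (x, t)).re +
        ((timeDeriv d u (x, t)).im * (u (x, t)).im + (u (x, t)).im * (timeDeriv d u (x, t)).im) := by
    simp only [Complex.mul_re, Complex.conj_re, Complex.conj_im]
    ring
  rw [hfun, hval]
  exact hd



/-- A smooth solution of the heat equation `∂u/∂t = Δu` on `ℝ^d × ℝ`, whose
spatial profiles (together with all derivatives) are Schwartz uniformly on compact time
intervals, and which has zero past, is identically zero. -/
theorem heat_equation_spatially_schwartz_null_solution_trivial (d : ℕ) (hd : 1 ≤ d)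
    (u : ((Fin d → ℝ) × ℝ) → ℂ) (hu : ContDiff ℝ (⊤ : ℕ∞) u)
    (hdecay : ∀ R : ℝ, 0 < R → ∀ α β : Fin d → ℕ, ∀ m : ℕ, ∃ C : ℝ,
      ∀ (x : Fin d → ℝ) (t : ℝ), |t| ≤ R →
        ‖(∏ k, x k ^ α k) • ((timeDeriv d)^[m] (spatialOp d β u) (x, t))‖ ≤ C)
    (hpast : ZeroPast d u)
    (hheat : ∀ q, timeDeriv d u q = ∑ k : Fin d, spaceDeriv d k (spaceDeriv d k u) q) :
    u = 0 := by
  obtain ⟨n, rfl⟩ : ∃ n, d = n + 1 := ⟨d - 1, (Nat.succ_pred_eq_of_pos hd).symm⟩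
  -- decay bounds
  have Bu : ∀ R : ℝ, 0 < R → ∃ C, 0 ≤ C ∧ ∀ x t, |t| ≤ R →
      ‖u (x, t)‖ ≤ C * wt (n+1) x := by
    intro R hR
    refine decay_bound fun α => ?_
    obtain ⟨C, hC⟩ := hdecay R hR α (fun _ => 0) 0
    refine ⟨C, fun x t ht => ?_⟩
    have h := hC x t ht
    rwa [Function.iterate_zero_apply, spatialOp_zero] at h
  have Bv : ∀ R : ℝ, 0 < R → ∃ C, 0 ≤ C ∧ ∀ x t, |t| ≤ R →
      ‖timeDeriv (n+1) u (x, t)‖ ≤ C * wt (n+1) x := by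
    intro R hR
    refine decay_bound fun α => ?_
    obtain ⟨C, hC⟩ := hdecay R hR α (fun _ => 0) 1
    refine ⟨C, fun x t ht => ?_⟩
    have h := hC x t ht
    rwa [Function.iterate_one, spatialOp_zero] at h
  have Bw : ∀ (k : Fin (n+1)) (R : ℝ), 0 < R → ∃ C, 0 ≤ C ∧ ∀ x t, |t| ≤ R →
      ‖spaceDeriv (n+1) k u (x, t)‖ ≤ C * wt (n+1) x := by
    intro k R hR
    refine decay_bound fun α => ?_
    obtain ⟨C, hC⟩ := hdecay R hR α (Pi.single k 1) 0
    refine ⟨C, fun x t ht => ?_⟩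
    have h := hC x t ht
    rwa [Function.iterate_zero_apply, spatialOp_single, Function.iterate_one] at h
  have Bw2 : ∀ (k : Fin (n+1)) (R : ℝ), 0 < R → ∃ C, 0 ≤ C ∧ ∀ x t, |t| ≤ R →
      ‖spaceDeriv (n+1) k (spaceDeriv (n+1) k u) (x, t)‖ ≤ C * wt (n+1) x := by
    intro k R hR
    refine decay_bound fun α => ?_
    obtain ⟨C, hC⟩ := hdecay R hR α (Pi.single k 2) 0
    refine ⟨C, fun x t ht => ?_⟩
    have h := hC x t ht
    have h2 : (spaceDeriv (n+1) k)^[2] =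
        spaceDeriv (n+1) k ∘ spaceDeriv (n+1) k := by
      rw [Function.iterate_succ, Function.iterate_one]
    rwa [Function.iterate_zero_apply, spatialOp_single, h2, Function.comp_apply] at h
  -- continuity helpers
  have slice_cont : ∀ (f : ((Fin (n+1) → ℝ) × ℝ) → ℂ), ContDiff ℝ (⊤ : ℕ∞) f → ∀ t : ℝ,
      Continuous (fun x : Fin (n+1) → ℝ => f (x, t)) := by
    intro f hf t
    exact hf.continuous.comp (continuous_id.prodMk continuous_const)
  -- the energy
  set F : ℝ → ℝ := fun t => ∫ x : Fin (n+1) → ℝ, Complex.normSq (u (x, t)) with hF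
  have hFderiv : ∀ t₀ : ℝ, HasDerivAt F
      (∫ x : Fin (n+1) → ℝ,
        2 * ((starRingEnd ℂ) (u (x, t₀)) * timeDeriv (n+1) u (x, t₀)).re) t₀ ∧
      (∫ x : Fin (n+1) → ℝ,
        2 * ((starRingEnd ℂ) (u (x, t₀)) * timeDeriv (n+1) u (x, t₀)).re) ≤ 0 := by
    intro t₀
    have hR : (0:ℝ) < |t₀| + 1 := by positivity
    obtain ⟨Cu, hCu0, hCu⟩ := Bu (|t₀| + 1) hR
    obtain ⟨Cv, hCv0, hCv⟩ := Bv (|t₀| + 1) hR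
    have ht₀ : |t₀| ≤ |t₀| + 1 := by linarith
    have hball : ∀ t ∈ Metric.ball t₀ 1, |t| ≤ |t₀| + 1 := by
      intro t ht
      rw [Metric.mem_ball, Real.dist_eq] at ht
      have := abs_sub_abs_le_abs_sub t t₀
      linarith
    constructor
    · have := hasDerivAt_integral_of_dominated_loc_of_deriv_le
        (F := fun t (x : Fin (n+1) → ℝ) => Complex.normSq (u (x, t)))
        (F' := fun t (x : Fin (n+1) → ℝ) =>
          2 * ((starRingEnd ℂ) (u (x, t)) * timeDeriv (n+1) u (x, t)).re)
        (bound := fun x => 2 * (Cu * Cv * wt (n+1) x))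
        (μ := volume) (x₀ := t₀) (s := Metric.ball t₀ 1) (Metric.ball_mem_nhds t₀ one_pos)
        ?meas ?int ?meas' ?bnd ?bint ?diff
      · exact this.2
      case meas =>
        refine Filter.Eventually.of_forall fun t => ?_
        exact ((Complex.continuous_normSq).comp (slice_cont u hu t)).aestronglyMeasurable
      case int =>
        refine integrable_of_decay ((Complex.continuous_normSq).comp (slice_cont u hu t₀))
          (Cu * Cu) fun x => ?_
        have h1 := hCu x t₀ ht₀
        have h2 : Complex.normSq (u (x, t₀)) = ‖u (x, t₀)‖^2 := by
          exact (Complex.sq_norm _).symm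
        rw [Real.norm_eq_abs, abs_of_nonneg (Complex.normSq_nonneg _), h2, pow_two]
        exact bound_mul h1 h1 (norm_nonneg _) (norm_nonneg _) hCu0 hCu0
          (wt_pos x) (wt_le_one x)
      case meas' =>
        have hc : Continuous (fun x : Fin (n+1) → ℝ =>
            2 * ((starRingEnd ℂ) (u (x, t₀)) * timeDeriv (n+1) u (x, t₀)).re) := by
          apply Continuous.mul continuous_const
          apply Complex.continuous_re.comp
          exact ((Complex.continuous_conj.comp (slice_cont u hu t₀)).mul
            (slice_cont _ (contDiff_timeDeriv hu) t₀))
        exact hc.aestronglyMeasurable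
      case bnd =>
        refine Filter.Eventually.of_forall fun x => fun t ht => ?_
        have h1 := hCu x t (hball t ht)
        have h2 := hCv x t (hball t ht)
        have h3 : ‖2 * ((starRingEnd ℂ) (u (x, t)) * timeDeriv (n+1) u (x, t)).re‖
            ≤ 2 * (‖u (x, t)‖ * ‖timeDeriv (n+1) u (x, t)‖) := by
          rw [norm_mul, Real.norm_ofNat]
          exact mul_le_mul_of_nonneg_left (re_mul_norm _ _) (by norm_num)
        refine h3.trans ?_
        have hm := bound_mul h1 h2 (norm_nonneg _) (norm_nonneg _) hCu0 hCv0
          (wt_pos x) (wt_le_one x)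
        show 2 * (‖u (x, t)‖ * ‖timeDeriv (n+1) u (x, t)‖) ≤ 2 * (Cu * Cv * wt (n+1) x)
        linarith
      case bint =>
        exact ((integrable_wt (n+1)).const_mul (Cu * Cv)).const_mul 2
      case diff =>
        refine Filter.Eventually.of_forall fun x => fun t _ => ?_
        exact hasDerivAt_normSq_time hu x t
    · -- the derivative is nonpositive
      -- term-wise integrals
      have termInt : ∀ k : Fin (n+1), Integrable (fun x : Fin (n+1) → ℝ =>
          ((starRingEnd ℂ) (u (x, t₀)) *
            spaceDeriv (n+1) k (spaceDeriv (n+1) k u) (x, t₀)).re) := by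
        intro k
        obtain ⟨Cw2, hCw20, hCw2⟩ := Bw2 k (|t₀| + 1) hR
        refine integrable_of_decay ?_ (Cu * Cw2) fun x => ?_
        · apply Complex.continuous_re.comp
          exact ((Complex.continuous_conj.comp (slice_cont u hu t₀)).mul
            (slice_cont _ (contDiff_spaceDeriv (contDiff_spaceDeriv hu k) k) t₀))
        · have h1 := hCu x t₀ ht₀
          have h2 := hCw2 x t₀ ht₀
          refine (re_mul_norm _ _).trans ?_
          exact bound_mul h1 h2 (norm_nonneg _) (norm_nonneg _) hCu0 hCw20
            (wt_pos x) (wt_le_one x)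
      have sqInt : ∀ k : Fin (n+1), Integrable (fun x : Fin (n+1) → ℝ =>
          Complex.normSq (spaceDeriv (n+1) k u (x, t₀))) := by
        intro k
        obtain ⟨Cw, hCw0, hCw⟩ := Bw k (|t₀| + 1) hR
        refine integrable_of_decay
          ((Complex.continuous_normSq).comp (slice_cont _ (contDiff_spaceDeriv hu k) t₀))
          (Cw * Cw) fun x => ?_
        have h1 := hCw x t₀ ht₀
        have h2 : Complex.normSq (spaceDeriv (n+1) k u (x, t₀))
            = ‖spaceDeriv (n+1) k u (x, t₀)‖^2 := by
          exact (Complex.sq_norm _).symm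
        rw [Real.norm_eq_abs, abs_of_nonneg (Complex.normSq_nonneg _), h2, pow_two]
        exact bound_mul h1 h1 (norm_nonneg _) (norm_nonneg _) hCw0 hCw0
          (wt_pos x) (wt_le_one x)
      -- each term integral equals minus a nonnegative quantity
      have termVal : ∀ k : Fin (n+1), (∫ x : Fin (n+1) → ℝ,
          ((starRingEnd ℂ) (u (x, t₀)) *
            spaceDeriv (n+1) k (spaceDeriv (n+1) k u) (x, t₀)).re) ≤ 0 := by
        intro k
        obtain ⟨Cw, hCw0, hCw⟩ := Bw k (|t₀| + 1) hR
        have hzero := integral_partial_zero k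
          (fun x => ((starRingEnd ℂ) (u (x, t₀)) * spaceDeriv (n+1) k u (x, t₀)).re)
          (fun x => Complex.normSq (spaceDeriv (n+1) k u (x, t₀)) +
            ((starRingEnd ℂ) (u (x, t₀)) *
              spaceDeriv (n+1) k (spaceDeriv (n+1) k u) (x, t₀)).re)
          (fun x s => hasDerivAt_hk hu k x t₀ s)
          ((sqInt k).add (termInt k)) (C := Cu * Cw)
          (fun x => by
            have h1 := hCu x t₀ ht₀
            have h2 := hCw x t₀ ht₀
            refine (re_mul_abs _ _).trans ?_
            exact bound_mul h1 h2 (norm_nonneg _) (norm_nonneg _) hCu0 hCw0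
              (wt_pos x) (wt_le_one x))
        rw [integral_add (sqInt k) (termInt k)] at hzero
        have hnn : 0 ≤ ∫ x : Fin (n+1) → ℝ, Complex.normSq (spaceDeriv (n+1) k u (x, t₀)) :=
          integral_nonneg fun x => Complex.normSq_nonneg _
        linarith
      -- expand the heat equation
      have expand : (fun x : Fin (n+1) → ℝ =>
          2 * ((starRingEnd ℂ) (u (x, t₀)) * timeDeriv (n+1) u (x, t₀)).re)
          = fun x => ∑ k : Fin (n+1), 2 * ((starRingEnd ℂ) (u (x, t₀)) *
              spaceDeriv (n+1) k (spaceDeriv (n+1) k u) (x, t₀)).re := by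
        funext x
        rw [hheat (x, t₀), Finset.mul_sum, Complex.re_sum, Finset.mul_sum]
      rw [expand, integral_finset_sum _ (fun k _ => ((termInt k).const_mul 2))]
      refine Finset.sum_nonpos fun k _ => ?_
      rw [integral_const_mul]
      have := termVal k
      linarith
  -- F is antitone
  have hdiff : Differentiable ℝ F := fun t => ((hFderiv t).1).differentiableAt
  have hanti : Antitone F := by
    apply antitone_of_deriv_nonpos hdiff
    intro t
    rw [(hFderiv t).1.deriv]
    exact (hFderiv t).2
  have hFneg : ∀ t : ℝ, t < 0 → F t = 0 := by
    intro t ht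
    show (∫ x : Fin (n+1) → ℝ, Complex.normSq (u (x, t))) = 0
    have : (fun x : Fin (n+1) → ℝ => Complex.normSq (u (x, t))) = fun _ => 0 := by
      funext x
      rw [hpast x t ht]
      simp
    rw [this]
    simp
  have hFzero : ∀ t : ℝ, F t = 0 := by
    intro t
    rcases lt_or_ge t 0 with ht | ht
    · exact hFneg t ht
    · have h1 : F t ≤ F (-1) := hanti (by linarith)
      have h2 : F (-1) = 0 := hFneg (-1) (by norm_num)
      have h3 : 0 ≤ F t := integral_nonneg fun x => Complex.normSq_nonneg _
      linarith
  -- conclude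
  funext q
  obtain ⟨x, t⟩ := q
  have hR : (0:ℝ) < |t| + 1 := by positivity
  obtain ⟨Cu, hCu0, hCu⟩ := Bu (|t| + 1) hR
  have hInt : Integrable (fun x : Fin (n+1) → ℝ => Complex.normSq (u (x, t))) := by
    refine integrable_of_decay ((Complex.continuous_normSq).comp (slice_cont u hu t))
      (Cu * Cu) fun y => ?_
    have h1 := hCu y t (by linarith [abs_nonneg t])
    have h2 : Complex.normSq (u (y, t)) = ‖u (y, t)‖^2 := by
      exact (Complex.sq_norm _).symm
    rw [Real.norm_eq_abs, abs_of_nonneg (Complex.normSq_nonneg _), h2, pow_two]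
    exact bound_mul h1 h1 (norm_nonneg _) (norm_nonneg _) hCu0 hCu0
      (wt_pos y) (wt_le_one y)
  have hae : (fun x : Fin (n+1) → ℝ => Complex.normSq (u (x, t)))
      =ᵐ[volume] (fun _ => 0) := by
    refine (integral_eq_zero_iff_of_nonneg (fun x => Complex.normSq_nonneg _) hInt).1 ?_
    exact hFzero t
  have heq : (fun x : Fin (n+1) → ℝ => Complex.normSq (u (x, t))) = fun _ => 0 :=
    (Continuous.ae_eq_iff_eq volume
      ((Complex.continuous_normSq).comp (slice_cont u hu t)) continuous_const).1 hae
  have := congrFun heq x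
  simpa [Complex.normSq_eq_zero] using this
end
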